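/- arXiv:1812.01933 — 2 statements merged into one kernel-verified Lean document; each statement's English description precedes it below -/
import Mathlib

section
/- Let n ≥ 1 be an integer, let 1 < p ≤ 1 + 2/n, and let u₀ : ℝⁿ → [0,∞) be measurable, Lebesgue integrable, and strictly positive on a set of positive measure. Then ∫₀^∞ ‖e^{−sΔ}u₀‖_{L^∞(ℝⁿ)}^{p−1} ds = ∞; in particular the smallness condition ∫₀^∞ ‖e^{−sΔ}u₀‖_{L^∞(ℝⁿ)}^{p−1} ds < 1/(K₁(p−1)) of Theorem 1.1 cannot hold for any K₁ > 0 when p ≤ 1 + 2/n. -/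
open MeasureTheory Real ENNReal

/-- The Gaussian heat kernel `h_t(x) = (4πt)^(-n/2) exp(-‖x‖²/(4t))` on `ℝⁿ`. -/
noncomputable def heatKernel (n : ℕ) (t : ℝ) (x : EuclideanSpace ℝ (Fin n)) : ℝ :=
  (4 * Real.pi * t) ^ (-(n : ℝ) / 2) * Real.exp (-‖x‖ ^ 2 / (4 * t))

/-- The heat semigroup `e^{-tΔ}` acting on nonnegative extended-real-valued functions:
`(e^{-tΔ}v)(x) = ∫ h_t(x-y) v(y) dy` for `t ≠ 0`, and the identity at `t = 0`. -/
noncomputable def heatSem (n : ℕ) (t : ℝ) (v : EuclideanSpace ℝ (Fin n) → ℝ≥0∞)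
    (x : EuclideanSpace ℝ (Fin n)) : ℝ≥0∞ :=
  if t = 0 then v x else ∫⁻ y, ENNReal.ofReal (heatKernel n t (x - y)) * v y

theorem smallness_condition_fails_at_or_below_fujita
    (n : ℕ) (hn : 1 ≤ n) (p : ℝ) (hp : 1 < p) (hpF : p ≤ 1 + 2 / n)
    (u₀ : EuclideanSpace ℝ (Fin n) → ℝ) (hu₀meas : Measurable u₀)
    (hu₀0 : ∀ x, 0 ≤ u₀ x) (hu₀int : Integrable u₀)
    (hu₀pos : 0 < volume {x | 0 < u₀ x}) :
    (∫⁻ s in Set.Ioi (0 : ℝ),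
        (essSup (heatSem n s (fun y => ENNReal.ofReal (u₀ y))) volume) ^ (p - 1)) = ⊤ ∧
    ∀ K₁ : ℝ, 0 < K₁ →
      ¬ (∫⁻ s in Set.Ioi (0 : ℝ),
          (essSup (heatSem n s (fun y => ENNReal.ofReal (u₀ y))) volume) ^ (p - 1)
        < ENNReal.ofReal (1 / (K₁ * (p - 1)))) := by
  set v : EuclideanSpace ℝ (Fin n) → ℝ≥0∞ := fun y => ENNReal.ofReal (u₀ y) with hv
  have hvmeas : Measurable v := ENNReal.measurable_ofReal.comp hu₀meas
  have hnpos : (0 : ℝ) < n := by exact_mod_cast hn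
  have hp1 : (0 : ℝ) < p - 1 := by linarith
  -- support of v
  have hsupp : Function.support v = {x | 0 < u₀ x} := by
    ext x
    simp [hv, Function.mem_support, ENNReal.ofReal_eq_zero, not_le]
  -- choose a ball carrying positive mass
  obtain ⟨k, hk⟩ : ∃ k : ℕ, 0 < volume ({x | 0 < u₀ x} ∩ Metric.ball (0 : EuclideanSpace ℝ (Fin n)) (k + 1)) := by
    by_contra h
    push_neg at h
    simp only [le_zero_iff] at h
    have hsub : {x : EuclideanSpace ℝ (Fin n) | 0 < u₀ x} ⊆
        ⋃ k : ℕ, ({x | 0 < u₀ x} ∩ Metric.ball (0 : EuclideanSpace ℝ (Fin n)) (k + 1)) := by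
      intro x hx
      obtain ⟨k, hk⟩ := exists_nat_gt ‖x‖
      exact Set.mem_iUnion.2 ⟨k, hx, by
        simpa [Metric.mem_ball, dist_zero_right] using hk.trans (by linarith)⟩
    have : volume {x : EuclideanSpace ℝ (Fin n) | 0 < u₀ x} = 0 :=
      measure_mono_null hsub (measure_iUnion_null fun k => h k)
    exact absurd this hu₀pos.ne'
  set R : ℝ := (k : ℝ) + 1 with hR
  have hR0 : 0 < R := by positivity
  set m : ℝ≥0∞ := ∫⁻ y in Metric.ball (0 : EuclideanSpace ℝ (Fin n)) R, v y with hm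
  have hm0 : 0 < m := by
    rw [hm, lintegral_pos_iff_support hvmeas,
      Measure.restrict_apply (measurableSet_support hvmeas), hsupp]
    exact hk
  have hmtop : m ≠ ⊤ := by
    have h1 : m ≤ ∫⁻ y, v y := setLIntegral_le_lintegral _ _
    have h2 : (∫⁻ y, v y) ≤ ∫⁻ y, (‖u₀ y‖₊ : ℝ≥0∞) :=
      lintegral_mono fun y => Real.ofReal_le_enorm _
    exact ((h1.trans h2).trans_lt hu₀int.2).ne
  set m₀ : ℝ := m.toReal with hm₀def
  have hm₀ : 0 < m₀ := ENNReal.toReal_pos hm0.ne' hmtop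
  have hmeq : m = ENNReal.ofReal m₀ := (ENNReal.ofReal_toReal hmtop).symm
  set c : ℝ := (4 * Real.pi) ^ (-(n : ℝ) / 2) * Real.exp (-1) with hcdef
  have hc : 0 < c :=
    mul_pos (Real.rpow_pos_of_pos (by positivity) _) (Real.exp_pos _)
  set T : ℝ := max 1 ((1 + R) ^ 2) with hTdef
  have hT1 : (1 : ℝ) ≤ T := le_max_left _ _
  have hTR : (1 + R) ^ 2 ≤ T := le_max_right _ _
  have hT0 : (0 : ℝ) < T := lt_of_lt_of_le one_pos hT1
  -- key pointwise lower bound for the essSup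
  have hbound : ∀ s ∈ Set.Ioi T,
      ENNReal.ofReal (c * m₀ * s ^ (-(n : ℝ) / 2)) ≤
        essSup (heatSem n s v) volume := by
    intro s hs
    have hsT : T < s := hs
    have hs0 : (0 : ℝ) < s := hT0.trans hsT
    -- kernel lower bound
    have hker : ∀ x ∈ Metric.ball (0 : EuclideanSpace ℝ (Fin n)) 1, ∀ y ∈ Metric.ball (0 : EuclideanSpace ℝ (Fin n)) R,
        c * s ^ (-(n : ℝ) / 2) ≤ heatKernel n s (x - y) := by
      intro x hx y hy
      rw [Metric.mem_ball, dist_zero_right] at hx hy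
      have h1 : (4 * Real.pi * s) ^ (-(n : ℝ) / 2) =
          (4 * Real.pi) ^ (-(n : ℝ) / 2) * s ^ (-(n : ℝ) / 2) :=
        Real.mul_rpow (by positivity) hs0.le
      have hxy : ‖x - y‖ ≤ 1 + R := (norm_sub_le x y).trans (by linarith)
      have h2 : Real.exp (-1) ≤ Real.exp (-‖x - y‖ ^ 2 / (4 * s)) := by
        apply Real.exp_le_exp.mpr
        rw [neg_div, neg_le_neg_iff, div_le_one (by positivity)]
        nlinarith [norm_nonneg (x - y), hTR, hsT, hT1]
      have hA : (0 : ℝ) < (4 * Real.pi) ^ (-(n : ℝ) / 2) * s ^ (-(n : ℝ) / 2) := by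
        have := Real.pi_pos
        exact mul_pos (Real.rpow_pos_of_pos (by positivity) _)
          (Real.rpow_pos_of_pos hs0 _)
      calc c * s ^ (-(n : ℝ) / 2)
          = ((4 * Real.pi) ^ (-(n : ℝ) / 2) * s ^ (-(n : ℝ) / 2)) * Real.exp (-1) := by
            rw [hcdef]; ring
        _ ≤ ((4 * Real.pi) ^ (-(n : ℝ) / 2) * s ^ (-(n : ℝ) / 2)) *
              Real.exp (-‖x - y‖ ^ 2 / (4 * s)) :=
            mul_le_mul_of_nonneg_left h2 hA.le
        _ = heatKernel n s (x - y) := by rw [heatKernel, h1]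
    have hcs : (0 : ℝ) < c * s ^ (-(n : ℝ) / 2) :=
      mul_pos hc (Real.rpow_pos_of_pos hs0 _)
    -- lower bound for the semigroup on the unit ball
    have hpt : ∀ x ∈ Metric.ball (0 : EuclideanSpace ℝ (Fin n)) 1,
        ENNReal.ofReal (c * m₀ * s ^ (-(n : ℝ) / 2)) ≤ heatSem n s v x := by
      intro x hx
      rw [heatSem, if_neg hs0.ne']
      have heq : ENNReal.ofReal (c * m₀ * s ^ (-(n : ℝ) / 2)) =
          ENNReal.ofReal (c * s ^ (-(n : ℝ) / 2)) * m := by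
        rw [hmeq, ← ENNReal.ofReal_mul hcs.le]
        ring_nf
      calc ENNReal.ofReal (c * m₀ * s ^ (-(n : ℝ) / 2))
          = ∫⁻ y in Metric.ball (0 : EuclideanSpace ℝ (Fin n)) R,
              ENNReal.ofReal (c * s ^ (-(n : ℝ) / 2)) * v y := by
            rw [lintegral_const_mul _ hvmeas, heq, hm]
        _ ≤ ∫⁻ y in Metric.ball (0 : EuclideanSpace ℝ (Fin n)) R,
              ENNReal.ofReal (heatKernel n s (x - y)) * v y :=
            setLIntegral_mono' measurableSet_ball fun y hy =>
              mul_le_mul_left (ENNReal.ofReal_le_ofReal (hker x hx y hy)) _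
        _ ≤ ∫⁻ y, ENNReal.ofReal (heatKernel n s (x - y)) * v y :=
            setLIntegral_le_lintegral _ _
    -- essSup lower bound
    by_contra hlt
    push_neg at hlt
    have hae := ENNReal.ae_le_essSup (μ := volume) (heatSem n s v)
    rw [ae_iff] at hae
    have hsubset : Metric.ball (0 : EuclideanSpace ℝ (Fin n)) 1 ⊆
        {x | ¬ heatSem n s v x ≤ essSup (heatSem n s v) volume} := fun x hx =>
      not_le.mpr (lt_of_lt_of_le hlt (hpt x hx))
    have hzero : volume (Metric.ball (0 : EuclideanSpace ℝ (Fin n)) 1) = 0 := measure_mono_null hsubset hae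
    exact absurd hzero (Metric.measure_ball_pos volume (0 : EuclideanSpace ℝ (Fin n)) one_pos).ne'
  -- the exponent
  set a : ℝ := (n : ℝ) / 2 * (p - 1) with hadef
  have ha1 : a ≤ 1 := by
    have h1 : p - 1 ≤ 2 / n := by linarith
    have h2 : a ≤ (n : ℝ) / 2 * (2 / n) :=
      mul_le_mul_of_nonneg_left h1 (by positivity)
    have h3 : (n : ℝ) / 2 * (2 / n) = 1 := by field_simp
    linarith
  set C : ℝ := (c * m₀) ^ (p - 1) with hCdef
  have hC : 0 < C := Real.rpow_pos_of_pos (mul_pos hc hm₀) _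
  -- divergence of the comparison integral
  have hdiv : (∫⁻ s in Set.Ioi T, ENNReal.ofReal (C * s ^ (-a))) = ⊤ := by
    by_contra h
    have hlt : (∫⁻ s in Set.Ioi T, ENNReal.ofReal (C * s ^ (-a))) < ⊤ :=
      lt_top_iff_ne_top.2 h
    have hmeasf : AEStronglyMeasurable (fun s : ℝ => C * s ^ (-a))
        (volume.restrict (Set.Ioi T)) :=
      ((continuousOn_const.mul (continuousOn_id.rpow_const fun x hx =>
        Or.inl (ne_of_gt (hT0.trans hx)))).aestronglyMeasurable measurableSet_Ioi)
    have hnonneg : 0 ≤ᵐ[volume.restrict (Set.Ioi T)] fun s : ℝ => C * s ^ (-a) := by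
      filter_upwards [ae_restrict_mem measurableSet_Ioi] with s hs
      have hs0 : (0 : ℝ) < s := hT0.trans hs
      positivity
    have hint : Integrable (fun s : ℝ => C * s ^ (-a))
        (volume.restrict (Set.Ioi T)) :=
      ⟨hmeasf, (hasFiniteIntegral_iff_ofReal hnonneg).2 hlt⟩
    have hint2 : IntegrableOn (fun s : ℝ => s ^ (-a)) (Set.Ioi T) := by
      have := hint.const_mul C⁻¹
      simpa [IntegrableOn, ← mul_assoc, inv_mul_cancel₀ hC.ne'] using this
    rw [integrableOn_Ioi_rpow_iff hT0] at hint2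
    linarith
  constructor
  · rw [eq_top_iff]
    calc (⊤ : ℝ≥0∞) = ∫⁻ s in Set.Ioi T, ENNReal.ofReal (C * s ^ (-a)) := hdiv.symm
      _ ≤ ∫⁻ s in Set.Ioi T, (essSup (heatSem n s v) volume) ^ (p - 1) := by
          apply setLIntegral_mono' measurableSet_Ioi
          intro s hs
          have hs0 : (0 : ℝ) < s := hT0.trans hs
          have hrw : C * s ^ (-a) = (c * m₀ * s ^ (-(n : ℝ) / 2)) ^ (p - 1) := by
            rw [Real.mul_rpow (by positivity) (Real.rpow_nonneg hs0.le _), hCdef, ← Real.rpow_mul hs0.le]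
            rw [hadef]; ring_nf
          rw [hrw, ← ENNReal.ofReal_rpow_of_pos (by positivity)]
          exact ENNReal.rpow_le_rpow (hbound s hs) hp1.le
      _ ≤ ∫⁻ s in Set.Ioi (0 : ℝ), (essSup (heatSem n s v) volume) ^ (p - 1) :=
          lintegral_mono_set (Set.Ioi_subset_Ioi hT0.le)
  · intro K₁ hK₁ hcon
    have : (∫⁻ s in Set.Ioi (0 : ℝ),
        (essSup (heatSem n s v) volume) ^ (p - 1)) = ⊤ := by
      rw [eq_top_iff]
      calc (⊤ : ℝ≥0∞) = ∫⁻ s in Set.Ioi T, ENNReal.ofReal (C * s ^ (-a)) := hdiv.symm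
        _ ≤ ∫⁻ s in Set.Ioi T, (essSup (heatSem n s v) volume) ^ (p - 1) := by
            apply setLIntegral_mono' measurableSet_Ioi
            intro s hs
            have hs0 : (0 : ℝ) < s := hT0.trans hs
            have hrw : C * s ^ (-a) = (c * m₀ * s ^ (-(n : ℝ) / 2)) ^ (p - 1) := by
              rw [Real.mul_rpow (by positivity) (Real.rpow_nonneg hs0.le _), hCdef, ← Real.rpow_mul hs0.le]
              rw [hadef]; ring_nf
            rw [hrw, ← ENNReal.ofReal_rpow_of_pos (by positivity)]
            exact ENNReal.rpow_le_rpow (hbound s hs) hp1.le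
        _ ≤ ∫⁻ s in Set.Ioi (0 : ℝ), (essSup (heatSem n s v) volume) ^ (p - 1) :=
            lintegral_mono_set (Set.Ioi_subset_Ioi hT0.le)
    rw [this] at hcon
    exact not_top_lt hcon
end

section
/- Let n ≥ 1 be an integer and A > 0. Let v : ℝⁿ → [0,∞] be measurable and suppose that for every t ≥ 1 the essential supremum over x ∈ ℝⁿ of ∫_{ℝⁿ} h_t(x−y) v(y) dy is at most A t^{−n/2}. Then ∫_{ℝⁿ} v(y) dy ≤ (4π)^{n/2} A. -/
open MeasureTheory Real ENNReal Topology Filter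

theorem l1_bound_from_heat_decay
    (n : ℕ) (hn : 1 ≤ n) (A : ℝ) (hA : 0 < A)
    (v : EuclideanSpace ℝ (Fin n) → ℝ≥0∞) (hv : Measurable v)
    (hdecay : ∀ t : ℝ, 1 ≤ t →
      essSup (fun x => ∫⁻ y, ENNReal.ofReal (heatKernel n t (x - y)) * v y) volume
        ≤ ENNReal.ofReal (A * t ^ (-(n : ℝ) / 2))) :
    (∫⁻ y, v y) ≤ ENNReal.ofReal ((4 * Real.pi) ^ ((n : ℝ) / 2) * A) := by
  have hae : ∀ᵐ x : EuclideanSpace ℝ (Fin n) ∂volume, ∀ k : ℕ,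
      (∫⁻ y, ENNReal.ofReal (heatKernel n ((k : ℝ) + 1) (x - y)) * v y)
        ≤ ENNReal.ofReal (A * ((k : ℝ) + 1) ^ (-(n : ℝ) / 2)) := by
    rw [ae_all_iff]
    intro k
    have hk : (1 : ℝ) ≤ (k : ℝ) + 1 := by
      have := Nat.cast_nonneg (α := ℝ) k; linarith
    exact (ae_le_essSup _).mono fun x hx => hx.trans (hdecay ((k : ℝ) + 1) hk)
  obtain ⟨x₀, hx₀⟩ := hae.exists
  set C := ENNReal.ofReal ((4 * Real.pi) ^ ((n : ℝ) / 2) * A) with hC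
  set f : ℕ → EuclideanSpace ℝ (Fin n) → ℝ≥0∞ :=
    fun k y => ENNReal.ofReal (Real.exp (-‖x₀ - y‖ ^ 2 / (4 * ((k : ℝ) + 1)))) * v y with hf
  have key : ∀ k : ℕ, (∫⁻ y, f k y) ≤ C := by
    intro k
    set t : ℝ := (k : ℝ) + 1 with htdef
    have ht0 : 0 < t := by positivity
    have hc0 : 0 < (4 * Real.pi * t) ^ (-(n : ℝ) / 2) :=
      Real.rpow_pos_of_pos (by positivity) _
    have hsplit : (∫⁻ y, ENNReal.ofReal (heatKernel n t (x₀ - y)) * v y)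
        = ENNReal.ofReal ((4 * Real.pi * t) ^ (-(n : ℝ) / 2)) * ∫⁻ y, f k y := by
      rw [← lintegral_const_mul' _ _ ENNReal.ofReal_ne_top]
      congr 1
      funext y
      simp only [heatKernel, hf]
      rw [ENNReal.ofReal_mul hc0.le, mul_assoc]
    have hb := hx₀ k
    rw [hsplit] at hb
    have hinv : ENNReal.ofReal ((4 * Real.pi * t) ^ (-(n : ℝ) / 2)) ≠ 0 := by
      simp [ENNReal.ofReal_eq_zero, not_le, hc0]
    calc (∫⁻ y, f k y)
        = (ENNReal.ofReal ((4 * Real.pi * t) ^ (-(n : ℝ) / 2)))⁻¹ *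
            (ENNReal.ofReal ((4 * Real.pi * t) ^ (-(n : ℝ) / 2)) * ∫⁻ y, f k y) := by
          rw [← mul_assoc, ENNReal.inv_mul_cancel hinv ENNReal.ofReal_ne_top, one_mul]
      _ ≤ (ENNReal.ofReal ((4 * Real.pi * t) ^ (-(n : ℝ) / 2)))⁻¹ *
            ENNReal.ofReal (A * t ^ (-(n : ℝ) / 2)) := by
          exact mul_le_mul_right hb _
      _ = C := by
          rw [← ENNReal.ofReal_inv_of_pos hc0, ← ENNReal.ofReal_mul (by positivity)]
          congr 1
          have e1 : (4 * Real.pi * t) ^ (-(n : ℝ) / 2)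
              = ((4 * Real.pi * t) ^ ((n : ℝ) / 2))⁻¹ := by
            rw [neg_div, Real.rpow_neg (by positivity)]
          have e2 : (4 * Real.pi * t) ^ ((n : ℝ) / 2)
              = (4 * Real.pi) ^ ((n : ℝ) / 2) * t ^ ((n : ℝ) / 2) :=
            Real.mul_rpow (by positivity) ht0.le
          have h2 : t ^ ((n : ℝ) / 2) * t ^ (-(n : ℝ) / 2) = 1 := by
            rw [← Real.rpow_add ht0, show (n:ℝ)/2 + -(n:ℝ)/2 = 0 from by ring, Real.rpow_zero]
          rw [e1, inv_inv, e2]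
          linear_combination (4 * Real.pi) ^ ((n : ℝ) / 2) * A * h2
  have hmeas : ∀ k : ℕ, Measurable (f k) := by
    intro k
    apply Measurable.mul _ hv
    apply ENNReal.measurable_ofReal.comp
    apply Real.continuous_exp.measurable.comp
    fun_prop
  have hmono : ∀ y, Monotone (fun k : ℕ => f k y) := by
    intro y i j hij
    simp only [hf]
    have h : ‖x₀ - y‖ ^ 2 / (4 * ((j : ℝ) + 1)) ≤ ‖x₀ - y‖ ^ 2 / (4 * ((i : ℝ) + 1)) := by
      gcongr
    refine mul_le_mul_left (ENNReal.ofReal_le_ofReal (Real.exp_le_exp.2 ?_)) _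
    rw [neg_div, neg_div]
    exact neg_le_neg h
  have hptw : ∀ y, Filter.Tendsto (fun k : ℕ => f k y) Filter.atTop (𝓝 (v y)) := by
    intro y
    have hg : Filter.Tendsto (fun k : ℕ => 4 * ((k : ℝ) + 1)) Filter.atTop Filter.atTop := by
      apply Filter.Tendsto.const_mul_atTop (by norm_num)
      exact Filter.tendsto_atTop_add_const_right _ _ tendsto_natCast_atTop_atTop
    have h0 : Filter.Tendsto (fun k : ℕ => -‖x₀ - y‖ ^ 2 / (4 * ((k : ℝ) + 1)))
        Filter.atTop (𝓝 0) :=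
      Filter.Tendsto.div_atTop tendsto_const_nhds hg
    have h1 : Filter.Tendsto
        (fun k : ℕ => ENNReal.ofReal (Real.exp (-‖x₀ - y‖ ^ 2 / (4 * ((k : ℝ) + 1)))))
        Filter.atTop (𝓝 1) := by
      have := (ENNReal.continuous_ofReal.tendsto _).comp
        ((Real.continuous_exp.tendsto 0).comp h0)
      simpa [Function.comp_def] using this
    have := ENNReal.Tendsto.mul_const (b := v y) h1 (Or.inl one_ne_zero)
    simpa using this
  have hlim : Filter.Tendsto (fun k : ℕ => ∫⁻ y, f k y) Filter.atTop (𝓝 (∫⁻ y, v y)) :=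
    lintegral_tendsto_of_tendsto_of_monotone (fun k => (hmeas k).aemeasurable)
      (Filter.Eventually.of_forall hmono) (Filter.Eventually.of_forall hptw)
  exact le_of_tendsto hlim (Filter.Eventually.of_forall key)
end
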